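/- Let C be a class of Kripke models enjoying n-IP for some natural number n. Then the logic of C has the uniform Lyndon interpolation property: for every modal formula φ and all finite sets P⁺, P⁻ of propositional variables, there exists a formula θ such that (1) φ→θ is satisfied at every world of every model in C, (2) v⁺(θ)⊆v⁺(φ)∖P⁺ and v⁻(θ)⊆v⁻(φ)∖P⁻, and (3) for every formula ψ such that φ→ψ is satisfied at every world of every model in C, v⁺(ψ)∩P⁺=∅ and v⁻(ψ)∩P⁻=∅, the formula θ→ψ is satisfied at every world of every model in C. -/

import Mathlib

/-- Modal formulas over countably many variables. -/
inductive ModalForm : Type where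
  | var : ℕ → ModalForm
  | bot : ModalForm
  | and : ModalForm → ModalForm → ModalForm
  | or : ModalForm → ModalForm → ModalForm
  | not : ModalForm → ModalForm
  | imp : ModalForm → ModalForm → ModalForm
  | box : ModalForm → ModalForm

namespace ModalForm

mutual
  /-- positively occurring variables -/
  def vpos : ModalForm → Finset ℕ
    | var p => {p}
    | bot => ∅
    | and φ ψ => vpos φ ∪ vpos ψ
    | or φ ψ => vpos φ ∪ vpos ψ
    | not φ => vneg φ
    | imp φ ψ => vneg φ ∪ vpos ψ
    | box φ => vpos φ
  /-- negatively occurring variables -/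
  def vneg : ModalForm → Finset ℕ
    | var _ => ∅
    | bot => ∅
    | and φ ψ => vneg φ ∪ vneg ψ
    | or φ ψ => vneg φ ∪ vneg ψ
    | not φ => vpos φ
    | imp φ ψ => vpos φ ∪ vneg ψ
    | box φ => vneg φ
end

/-- Modal depth: maximal nesting of `□`. -/
def depth : ModalForm → ℕ
  | var _ => 0
  | bot => 0
  | and φ ψ => max (depth φ) (depth ψ)
  | or φ ψ => max (depth φ) (depth ψ)
  | not φ => depth φ
  | imp φ ψ => max (depth φ) (depth ψ)
  | box φ => depth φ + 1

/-- `◇φ := ¬□¬φ` -/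
def dia (φ : ModalForm) : ModalForm := not (box (not φ))

/-- `⊤ := ¬⊥` -/
def top : ModalForm := not bot

end ModalForm

/-- An S4 Kripke frame: nonempty set of worlds with a reflexive transitive relation. -/
structure KFrame : Type 1 where
  W : Type
  R : W → W → Prop
  nonempty : Nonempty W
  refl : ∀ x, R x x
  trans : ∀ x y z, R x y → R y z → R x z

/-- A Kripke model: a frame with a valuation. -/
structure KModel : Type 1 extends KFrame where
  val : W → ℕ → Prop

/-- The model based on frame `F` with valuation `V`. -/
def KFrame.toModel (F : KFrame) (V : F.W → ℕ → Prop) : KModel :=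
  { toKFrame := F, val := V }

/-- Satisfaction in a Kripke model. -/
def KModel.Sat (M : KModel) : M.W → ModalForm → Prop
  | w, .var p => M.val w p
  | _, .bot => False
  | w, .and φ ψ => M.Sat w φ ∧ M.Sat w ψ
  | w, .or φ ψ => M.Sat w φ ∨ M.Sat w ψ
  | w, .not φ => ¬ M.Sat w φ
  | w, .imp φ ψ => M.Sat w φ → M.Sat w ψ
  | w, .box φ => ∀ y, M.R w y → M.Sat y φ

/-- `(M0,w0) →ₙ^{(P⁺,P⁻)} (M1,w1)`: every `(P⁺,P⁻)`-formula of depth ≤ n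
satisfied at `(M0,w0)` is satisfied at `(M1,w1)`. -/
def ModalArrow (Pp Pm : Finset ℕ) (n : ℕ) (M0 : KModel) (w0 : M0.W)
    (M1 : KModel) (w1 : M1.W) : Prop :=
  ∀ φ : ModalForm, φ.vpos ⊆ Pp → φ.vneg ⊆ Pm → φ.depth ≤ n →
    M0.Sat w0 φ → M1.Sat w1 φ

/-- p-morphism between frames. -/
def PMorphism (F G : KFrame) (f : F.W → G.W) : Prop :=
  (∀ x y, F.R x y → G.R (f x) (f y)) ∧
  (∀ x w, G.R (f x) w → ∃ z, F.R x z ∧ f z = w)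

/-- The class `C` of Kripke models enjoys `n`-IP. -/
def EnjoysIP (C : Set KModel) (n : ℕ) : Prop :=
  ∀ (Pp Pm : Finset ℕ) (M0 M1 : KModel), M0 ∈ C → M1 ∈ C →
    ∀ (w0 : M0.W) (w1 : M1.W), ModalArrow Pp Pm n M0 w0 M1 w1 →
      ∃ (F : KFrame) (wstar : F.W) (f0 : F.W → M0.W) (f1 : F.W → M1.W),
        (∀ V : F.W → ℕ → Prop, F.toModel V ∈ C) ∧
        PMorphism F M0.toKFrame f0 ∧
        PMorphism F M1.toKFrame f1 ∧
        f0 wstar = w0 ∧ f1 wstar = w1 ∧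
        ∀ x : F.W, ModalArrow Pp Pm 0 M0 (f0 x) M1 (f1 x)

/-- A world is final iff every successor is also a predecessor. -/
def KModel.Final (M : KModel) (w : M.W) : Prop := ∀ y, M.R w y → M.R y w

/-- The cluster of a world. -/
def KModel.cluster (M : KModel) (w : M.W) : Set M.W := {u | M.R w u ∧ M.R u w}

/-- Cluster `C0` of `M0` matches cluster `C1` of `M1`. -/
def Matches (Pp Pm : Finset ℕ) (M0 M1 : KModel) (C0 : Set M0.W) (C1 : Set M1.W) : Prop :=
  (∀ u0 ∈ C0, ∃ u1 ∈ C1, ModalArrow Pp Pm 0 M0 u0 M1 u1) ∧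
  (∀ u1 ∈ C1, ∃ u0 ∈ C0, ModalArrow Pp Pm 0 M0 u0 M1 u1)

/-- `φ` is satisfied at every world of every model in `C`. -/
def ValidOn (C : Set KModel) (φ : ModalForm) : Prop :=
  ∀ M ∈ C, ∀ w : M.W, M.Sat w φ


/-!
The interpolant `θ` is the disjunction of the depth-`n` characteristic formulas, over the variables
`(v⁺(φ) ∖ P⁺, v⁻(φ) ∖ P⁻)`, of all pointed models of `φ` in `C`; there are only finitely many such
formulas. If `θ` holds at `(M1, w1)`, then `(M0, w0) →ₙ (M1, w1)` for some pointed model `(M0, w0)`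
of `φ`, and `n`-IP provides a frame `F*` with p-morphisms onto both models. Valuating `F*` by `M0`
on the variables of `φ` and by `M1` on those of `ψ` is consistent up to the monotonicity that the
signs of occurrences allow, so `φ` transfers from `w0` to `w*`, hence `ψ` holds at `w*` because
`F*` carries models of `C`, and `ψ` transfers on to `w1`. Both transfers are instances of one
fact: satisfaction of signed formulas is preserved by any back-and-forth game that respects the
signs at the atoms, such as the graph of a p-morphism.
-/

namespace ModalForm

/-- `χ` is a `(Sp, Sm)`-formula in the sense of `ModalArrow`. -/
def IsOver (Sp Sm : Finset ℕ) (χ : ModalForm) : Prop := χ.vpos ⊆ Sp ∧ χ.vneg ⊆ Sm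

section IsOver

variable {Sp Sm : Finset ℕ} {a b : ModalForm}

@[simp] lemma isOver_var {p : ℕ} : (var p).IsOver Sp Sm ↔ p ∈ Sp := by
  simp [IsOver, vpos, vneg]

@[simp] lemma isOver_bot : bot.IsOver Sp Sm := by simp [IsOver, vpos, vneg]

@[simp] lemma isOver_not : a.not.IsOver Sp Sm ↔ a.IsOver Sm Sp := by
  simp only [IsOver, vpos, vneg, and_comm]

@[simp] lemma isOver_and : (a.and b).IsOver Sp Sm ↔ a.IsOver Sp Sm ∧ b.IsOver Sp Sm := by
  simp only [IsOver, vpos, vneg, Finset.union_subset_iff]; tauto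

@[simp] lemma isOver_or : (a.or b).IsOver Sp Sm ↔ a.IsOver Sp Sm ∧ b.IsOver Sp Sm := by
  simp only [IsOver, vpos, vneg, Finset.union_subset_iff]; tauto

@[simp] lemma isOver_imp : (a.imp b).IsOver Sp Sm ↔ a.IsOver Sm Sp ∧ b.IsOver Sp Sm := by
  simp only [IsOver, vpos, vneg, Finset.union_subset_iff]; tauto

@[simp] lemma isOver_box : a.box.IsOver Sp Sm ↔ a.IsOver Sp Sm := by
  simp only [IsOver, vpos, vneg]

@[simp] lemma isOver_dia : a.dia.IsOver Sp Sm ↔ a.IsOver Sp Sm := by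
  simp [dia]

@[simp] lemma isOver_top : top.IsOver Sp Sm := by simp [top]

end IsOver

noncomputable def conj (s : Finset ModalForm) : ModalForm := s.toList.foldr and top

noncomputable def disj (s : Finset ModalForm) : ModalForm := s.toList.foldr or bot

@[simp] lemma isOver_conj {Sp Sm : Finset ℕ} {s : Finset ModalForm} :
    (conj s).IsOver Sp Sm ↔ ∀ χ ∈ s, χ.IsOver Sp Sm := by
  simp only [conj, ← Finset.mem_toList]
  induction s.toList <;> simp [*]

@[simp] lemma isOver_disj {Sp Sm : Finset ℕ} {s : Finset ModalForm} :
    (disj s).IsOver Sp Sm ↔ ∀ χ ∈ s, χ.IsOver Sp Sm := by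
  simp only [disj, ← Finset.mem_toList]
  induction s.toList <;> simp [*]

end ModalForm

open ModalForm

namespace KModel

variable (M : KModel) (w : M.W)

@[simp] lemma sat_dia (a : ModalForm) : M.Sat w a.dia ↔ ∃ v, M.R w v ∧ M.Sat v a := by
  simp [dia, Sat]

@[simp] lemma sat_conj (s : Finset ModalForm) : M.Sat w (conj s) ↔ ∀ χ ∈ s, M.Sat w χ := by
  simp only [conj, ← Finset.mem_toList]
  induction s.toList with
  | nil => simp [Sat, top]
  | cons χ l ih => simp [ih, Sat]

@[simp] lemma sat_disj (s : Finset ModalForm) : M.Sat w (disj s) ↔ ∃ χ ∈ s, M.Sat w χ := by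
  simp only [disj, ← Finset.mem_toList]
  induction s.toList <;> simp [*, Sat]

end KModel

def AtomsAgree (Sp Sm : Finset ℕ) (M N : KModel) (w : M.W) (v : N.W) : Prop :=
  (∀ p ∈ Sp, M.val w p → N.val v p) ∧ ∀ p ∈ Sm, N.val v p → M.val w p

lemma AtomsAgree.symm {Sp Sm : Finset ℕ} {M N : KModel} {w : M.W} {v : N.W}
    (h : AtomsAgree Sp Sm M N w v) : AtomsAgree Sm Sp N M v w :=
  ⟨h.2, h.1⟩

lemma atomsAgree_of_modalArrow {Sp Sm : Finset ℕ} {n : ℕ} {M N : KModel} {w : M.W} {v : N.W}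
    (h : ModalArrow Sp Sm n M w N v) : AtomsAgree Sp Sm M N w v := by
  refine ⟨fun p hp hw => h (var p) ?_ ?_ ?_ hw, fun p hp hv => ?_⟩
  · simpa [vpos] using hp
  · simp [vneg]
  · simp [depth]
  · by_contra hw
    exact h (var p).not (by simp [vpos, vneg]) (by simpa [vpos, vneg] using hp) (by simp [depth])
      hw hv

/-- The `n`-round back-and-forth game in which the variables of `Sp` may only become true and
those of `Sm` only become false when passing from `M` to `N`. -/
def Simulates (Sp Sm : Finset ℕ) (M N : KModel) : ℕ → M.W → N.W → Prop
  | 0, w, v => AtomsAgree Sp Sm M N w v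
  | n + 1, w, v => AtomsAgree Sp Sm M N w v ∧
      (∀ w', M.R w w' → ∃ v', N.R v v' ∧ Simulates Sp Sm M N n w' v') ∧
      (∀ v', N.R v v' → ∃ w', M.R w w' ∧ Simulates Sp Sm M N n w' v')

namespace Simulates

variable {Sp Sm : Finset ℕ} {M N : KModel}

lemma atomsAgree : ∀ {n : ℕ} {w : M.W} {v : N.W},
    Simulates Sp Sm M N n w v → AtomsAgree Sp Sm M N w v
  | 0, _, _, h => h
  | _ + 1, _, _, h => h.1

lemma symm : ∀ {n : ℕ} {w : M.W} {v : N.W},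
    Simulates Sp Sm M N n w v → Simulates Sm Sp N M n v w
  | 0, _, _, h => AtomsAgree.symm h
  | _ + 1, _, _, ⟨hat, hforth, hback⟩ =>
      ⟨hat.symm, fun v' hv' => (hback v' hv').imp fun _ h => ⟨h.1, h.2.symm⟩,
        fun w' hw' => (hforth w' hw').imp fun _ h => ⟨h.1, h.2.symm⟩⟩

theorem sat {χ : ModalForm} : ∀ {Sp Sm : Finset ℕ} {M N : KModel} {n : ℕ} {w : M.W} {v : N.W},
    χ.IsOver Sp Sm → χ.depth ≤ n → Simulates Sp Sm M N n w v → M.Sat w χ → N.Sat v χ := by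
  induction χ with
  | var p => exact fun hχ _ hs => hs.atomsAgree.1 p (isOver_var.1 hχ)
  | bot => exact fun _ _ _ h => h
  | and a b iha ihb =>
      intro _ _ _ _ _ _ _ hχ hd hs h
      simp only [isOver_and, depth, max_le_iff] at hχ hd
      exact ⟨iha hχ.1 hd.1 hs h.1, ihb hχ.2 hd.2 hs h.2⟩
  | or a b iha ihb =>
      intro _ _ _ _ _ _ _ hχ hd hs h
      simp only [isOver_or, depth, max_le_iff] at hχ hd
      exact h.imp (iha hχ.1 hd.1 hs) (ihb hχ.2 hd.2 hs)
  | not a iha =>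
      intro _ _ _ _ _ _ _ hχ hd hs h ha
      exact h (iha (isOver_not.1 hχ) hd hs.symm ha)
  | imp a b iha ihb =>
      intro _ _ _ _ _ _ _ hχ hd hs h ha
      simp only [isOver_imp, depth, max_le_iff] at hχ hd
      exact ihb hχ.2 hd.2 hs (h (iha hχ.1 hd.1 hs.symm ha))
  | box a iha =>
      intro _ _ _ _ n _ _ hχ hd hs h v' hv'
      cases n with
      | zero => simp [depth] at hd
      | succ m =>
          obtain ⟨w', hw', hs'⟩ := hs.2.2 v' hv'
          exact iha (isOver_box.1 hχ) (by simpa [depth] using hd) hs' (h w' hw')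

lemma modalArrow {n : ℕ} {w : M.W} {v : N.W} (h : Simulates Sp Sm M N n w v) :
    ModalArrow Sp Sm n M w N v :=
  fun _ hpos hneg hd => sat ⟨hpos, hneg⟩ hd h

end Simulates

lemma simulates_of_pMorphism {Sp Sm : Finset ℕ} {M N : KModel} {f : M.W → N.W}
    (hf : PMorphism M.toKFrame N.toKFrame f) (hat : ∀ x, AtomsAgree Sp Sm M N x (f x)) :
    ∀ n x, Simulates Sp Sm M N n x (f x)
  | 0, x => hat x
  | n + 1, x =>
      ⟨hat x, fun x' hx' => ⟨f x', hf.1 x x' hx', simulates_of_pMorphism hf hat n x'⟩,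
        fun v hv => by
          obtain ⟨x', hx', rfl⟩ := hf.2 x v hv
          exact ⟨x', hx', simulates_of_pMorphism hf hat n x'⟩⟩

noncomputable instance : DecidableEq ModalForm := Classical.decEq _

namespace ModalForm

noncomputable def lit (A B : Finset ℕ) : ModalForm :=
  (conj (A.image var)).and (conj (B.image fun p => (var p).not))

noncomputable def charStep (b : ModalForm) (s : Finset ModalForm) : ModalForm :=
  b.and ((conj (s.image dia)).and (disj s).box)

lemma isOver_lit {Sp Sm A B : Finset ℕ} (hA : A ⊆ Sp) (hB : B ⊆ Sm) : (lit A B).IsOver Sp Sm := by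
  simp only [lit, isOver_and, isOver_conj, Finset.forall_mem_image, isOver_var, isOver_not]
  exact ⟨hA, hB⟩

lemma isOver_charStep {Sp Sm : Finset ℕ} {b : ModalForm} {s : Finset ModalForm}
    (hb : b.IsOver Sp Sm) (hs : ∀ γ ∈ s, γ.IsOver Sp Sm) : (charStep b s).IsOver Sp Sm := by
  simp only [charStep, isOver_and, isOver_conj, Finset.forall_mem_image, isOver_dia,
    isOver_box, isOver_disj]
  exact ⟨hb, hs, hs⟩

end ModalForm

namespace KModel

variable (M : KModel) (w : M.W)

@[simp] lemma sat_lit (A B : Finset ℕ) :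
    M.Sat w (lit A B) ↔ (∀ p ∈ A, M.val w p) ∧ ∀ p ∈ B, ¬ M.val w p := by
  simp [lit, Sat]

@[simp] lemma sat_charStep (b : ModalForm) (s : Finset ModalForm) :
    M.Sat w (charStep b s) ↔ M.Sat w b ∧ (∀ γ ∈ s, ∃ v, M.R w v ∧ M.Sat v γ) ∧
      ∀ v, M.R w v → ∃ γ ∈ s, M.Sat v γ := by
  simp [charStep, Sat]

end KModel

section CharForm

open Classical

noncomputable def litSet (Sp Sm : Finset ℕ) : Finset ModalForm :=
  (Sp.powerset ×ˢ Sm.powerset).image fun AB => lit AB.1 AB.2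

/-- A finite set containing all depth-`n` characteristic formulas over `(Sp, Sm)`; it makes the
interpolant a finite disjunction. -/
noncomputable def charSet (Sp Sm : Finset ℕ) : ℕ → Finset ModalForm
  | 0 => litSet Sp Sm
  | n + 1 => (litSet Sp Sm ×ˢ (charSet Sp Sm n).powerset).image fun bs => charStep bs.1 bs.2

noncomputable def KModel.charLit (M : KModel) (Sp Sm : Finset ℕ) (w : M.W) : ModalForm :=
  lit (Sp.filter (M.val w ·)) (Sm.filter (¬ M.val w ·))

noncomputable def KModel.charForm (M : KModel) (Sp Sm : Finset ℕ) : ℕ → M.W → ModalForm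
  | 0, w => M.charLit Sp Sm w
  | n + 1, w => charStep (M.charLit Sp Sm w)
      ((charSet Sp Sm n).filter fun γ => ∃ v, M.R w v ∧ M.charForm Sp Sm n v = γ)

namespace KModel

variable (M : KModel) (Sp Sm : Finset ℕ)

lemma charLit_mem_litSet (w : M.W) : M.charLit Sp Sm w ∈ litSet Sp Sm :=
  Finset.mem_image.2 ⟨(Sp.filter (M.val w ·), Sm.filter (¬ M.val w ·)), Finset.mem_product.2
    ⟨Finset.mem_powerset.2 (Finset.filter_subset _ _),
      Finset.mem_powerset.2 (Finset.filter_subset _ _)⟩, rfl⟩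

lemma isOver_charLit (w : M.W) : (M.charLit Sp Sm w).IsOver Sp Sm :=
  isOver_lit (Finset.filter_subset _ _) (Finset.filter_subset _ _)

lemma sat_charLit_self (w : M.W) : M.Sat w (M.charLit Sp Sm w) := by
  simp [charLit]

lemma atomsAgree_of_sat_charLit {N : KModel} {w : M.W} {v : N.W}
    (h : N.Sat v (M.charLit Sp Sm w)) : AtomsAgree Sp Sm M N w v := by
  simp only [charLit, sat_lit, Finset.mem_filter, and_imp] at h
  exact ⟨h.1, fun p hp hv => by_contra fun hw => h.2 p hp hw hv⟩

lemma charForm_mem_charSet : ∀ n w, M.charForm Sp Sm n w ∈ charSet Sp Sm n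
  | 0, w => M.charLit_mem_litSet Sp Sm w
  | _ + 1, w => Finset.mem_image.2 ⟨(M.charLit Sp Sm w, _), Finset.mem_product.2
      ⟨M.charLit_mem_litSet Sp Sm w, Finset.mem_powerset.2 (Finset.filter_subset _ _)⟩, rfl⟩

lemma isOver_charForm : ∀ n w, (M.charForm Sp Sm n w).IsOver Sp Sm
  | 0, w => M.isOver_charLit Sp Sm w
  | n + 1, w => isOver_charStep (M.isOver_charLit Sp Sm w) fun γ hγ => by
      obtain ⟨-, v, -, rfl⟩ := Finset.mem_filter.1 hγ
      exact isOver_charForm n v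

lemma sat_charForm_self : ∀ n w, M.Sat w (M.charForm Sp Sm n w)
  | 0, w => M.sat_charLit_self Sp Sm w
  | n + 1, w => by
      refine (sat_charStep _ _ _ _).2 ⟨M.sat_charLit_self Sp Sm w, fun γ hγ => ?_, fun v hv => ?_⟩
      · obtain ⟨-, v, hv, rfl⟩ := Finset.mem_filter.1 hγ
        exact ⟨v, hv, sat_charForm_self n v⟩
      · exact ⟨_, Finset.mem_filter.2 ⟨charForm_mem_charSet M Sp Sm n v, v, hv, rfl⟩,
          sat_charForm_self n v⟩

lemma simulates_of_sat_charForm {N : KModel} :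
    ∀ {n w} {v : N.W}, N.Sat v (M.charForm Sp Sm n w) → Simulates Sp Sm M N n w v
  | 0, _, _, h => M.atomsAgree_of_sat_charLit Sp Sm h
  | n + 1, w, v, h => by
      obtain ⟨h0, hforth, hback⟩ := (sat_charStep _ _ _ _).1 h
      refine ⟨M.atomsAgree_of_sat_charLit Sp Sm h0, fun w' hw' => ?_, fun v' hv' => ?_⟩
      · obtain ⟨v', hv', hsat⟩ := hforth _
          (Finset.mem_filter.2 ⟨charForm_mem_charSet M Sp Sm n w', w', hw', rfl⟩)
        exact ⟨v', hv', simulates_of_sat_charForm hsat⟩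
      · obtain ⟨γ, hγ, hsat⟩ := hback v' hv'
        obtain ⟨-, w', hw', rfl⟩ := Finset.mem_filter.1 hγ
        exact ⟨w', hw', simulates_of_sat_charForm hsat⟩

end KModel

end CharForm

theorem EnjoysIP.sat_of_modalArrow {C : Set KModel} {n : ℕ} (hC : EnjoysIP C n)
    {φ ψ : ModalForm} {Pp Pm : Finset ℕ} (hφψ : ValidOn C (φ.imp ψ))
    (hpos : Disjoint ψ.vpos Pp) (hneg : Disjoint ψ.vneg Pm)
    {M0 M1 : KModel} (hM0 : M0 ∈ C) (hM1 : M1 ∈ C) {w0 : M0.W} {w1 : M1.W}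
    (harrow : ModalArrow (φ.vpos \ Pp) (φ.vneg \ Pm) n M0 w0 M1 w1) (hφ : M0.Sat w0 φ) :
    M1.Sat w1 ψ := by
  obtain ⟨F, wstar, f0, f1, hF, hf0, hf1, rfl, rfl, harrow0⟩ := hC _ _ M0 M1 hM0 hM1 w0 w1 harrow
  have hagree x := atomsAgree_of_modalArrow (harrow0 x)
  -- The least valuation above `M0` on `φ.vpos` and above `M1` on `ψ.vneg`; the atomic part of
  -- `harrow` keeps it below `M0` on `φ.vneg` and below `M1` on `ψ.vpos`.
  let V : F.W → ℕ → Prop := fun x p =>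
    (p ∈ φ.vpos ∧ M0.val (f0 x) p) ∨ (p ∈ ψ.vneg ∧ M1.val (f1 x) p)
  have hV0 x : AtomsAgree φ.vneg φ.vpos (F.toModel V) M0 x (f0 x) := by
    refine ⟨fun p hp hv => hv.elim And.right fun hv => (hagree x).2 p ?_ hv.2,
      fun p hp hw => Or.inl ⟨hp, hw⟩⟩
    exact Finset.mem_sdiff.2 ⟨hp, Finset.disjoint_left.1 hneg hv.1⟩
  have hV1 x : AtomsAgree ψ.vpos ψ.vneg (F.toModel V) M1 x (f1 x) := by
    refine ⟨fun p hp hv => hv.elim (fun hv => (hagree x).1 p ?_ hv.2) And.right,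
      fun p hp hw => Or.inr ⟨hp, hw⟩⟩
    exact Finset.mem_sdiff.2 ⟨hv.1, Finset.disjoint_left.1 hpos hp⟩
  have hφstar : (F.toModel V).Sat wstar φ :=
    ((simulates_of_pMorphism hf0 hV0 φ.depth wstar).symm).sat ⟨subset_rfl, subset_rfl⟩ le_rfl hφ
  exact (simulates_of_pMorphism hf1 hV1 ψ.depth wstar).sat ⟨subset_rfl, subset_rfl⟩ le_rfl
    (hφψ _ (hF V) wstar hφstar)

theorem stmt3 (C : Set KModel) (n : ℕ) (h : EnjoysIP C n)
    (φ : ModalForm) (Pp Pm : Finset ℕ) :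
    ∃ θ : ModalForm,
      ValidOn C (φ.imp θ) ∧
      θ.vpos ⊆ φ.vpos \ Pp ∧ θ.vneg ⊆ φ.vneg \ Pm ∧
      ∀ ψ : ModalForm, ValidOn C (φ.imp ψ) →
        Disjoint ψ.vpos Pp → Disjoint ψ.vneg Pm →
        ValidOn C (θ.imp ψ) := by
  classical
  set Sp := φ.vpos \ Pp
  set Sm := φ.vneg \ Pm
  set Θ := (charSet Sp Sm n).filter fun γ => ∃ M ∈ C, ∃ w, M.Sat w φ ∧ M.charForm Sp Sm n w = γ
  have hΘ : (disj Θ).IsOver Sp Sm := isOver_disj.2 fun γ hγ => by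
    obtain ⟨-, M, -, w, -, rfl⟩ := Finset.mem_filter.1 hγ
    exact M.isOver_charForm Sp Sm n w
  refine ⟨disj Θ, fun M hM w hw => ?_, hΘ.1, hΘ.2, fun ψ hψ hpos hneg M1 hM1 w1 hθ => ?_⟩
  · exact (M.sat_disj w Θ).2 ⟨_, Finset.mem_filter.2 ⟨M.charForm_mem_charSet Sp Sm n w,
      M, hM, w, hw, rfl⟩, M.sat_charForm_self Sp Sm n w⟩
  · obtain ⟨γ, hγ, hsat⟩ := (M1.sat_disj w1 Θ).1 hθ
    obtain ⟨-, M0, hM0, w0, hφ, rfl⟩ := Finset.mem_filter.1 hγ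
    exact h.sat_of_modalArrow hψ hpos hneg hM0 hM1
      (M0.simulates_of_sat_charForm Sp Sm hsat).modalArrow hφ
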